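/- Let (e_n) be a basic sequence in a real Banach space X, let R be ℤ or ℚ, and let E be a metric space. The relation < is ill-founded on Coa(R,(e_n),E) if and only if there is an infinite subsequence e_{n₁}, e_{n₂}, e_{n₃}, … such that R[e_{n₁},e_{n₂},…] (the set of finite R-linear combinations of the e_{n_k}, with the norm-induced metric) coarsely embeds into E. -/

import Mathlib

open Filter Set Topology
open scoped ENNReal

noncomputable section

/-! ### Metric notions of embeddability -/

/-- A coarse embedding between (pseudo)metric spaces. -/
def CoarseEmbeddingMap {X E : Type*} [PseudoMetricSpace X] [PseudoMetricSpace E]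
    (f : X → E) : Prop :=
  ∃ κ ω : ℝ → ℝ,
    MonotoneOn κ (Set.Ici 0) ∧ MonotoneOn ω (Set.Ici 0) ∧
    (∀ t : ℝ, 0 ≤ t → 0 ≤ κ t ∧ 0 ≤ ω t) ∧
    Filter.Tendsto κ Filter.atTop Filter.atTop ∧
    ∀ x y : X, κ (dist x y) ≤ dist (f x) (f y) ∧ dist (f x) (f y) ≤ ω (dist x y)

/-- A uniform embedding between (pseudo)metric spaces. -/
def UniformEmbeddingMapNL {X E : Type*} [PseudoMetricSpace X] [PseudoMetricSpace E]
    (f : X → E) : Prop :=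
  ∃ κ ω : ℝ → ℝ,
    MonotoneOn κ (Set.Ici 0) ∧ MonotoneOn ω (Set.Ici 0) ∧
    (∀ t : ℝ, 0 ≤ t → 0 ≤ κ t ∧ 0 ≤ ω t) ∧
    (∀ t : ℝ, 0 < t → 0 < κ t) ∧
    Filter.Tendsto ω (nhdsWithin 0 (Set.Ioi 0)) (nhds 0) ∧
    ∀ x y : X, κ (dist x y) ≤ dist (f x) (f y) ∧ dist (f x) (f y) ≤ ω (dist x y)

/-- A bi-Lipschitz embedding between (pseudo)metric spaces. -/
def BiLipschitzEmbeddingMap {X E : Type*} [PseudoMetricSpace X] [PseudoMetricSpace E]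
    (f : X → E) : Prop :=
  ∃ c C : ℝ, 0 < c ∧ c ≤ C ∧
    ∀ x y : X, c * dist x y ≤ dist (f x) (f y) ∧ dist (f x) (f y) ≤ C * dist x y

/-! ### The set `𝒵`, functional moduli and the classes `M_coarse`, `M_uniform`, `M_Lipschitz` -/

/-- The set `𝒵 = {…,1/3,1/2,1,2,3,…} ⊆ (0,∞)`. -/
def Zset : Set ℝ := {r | ∃ n : ℕ, 1 ≤ n ∧ (r = n ∨ r = 1 / n)}

/-- Membership in `𝒩`: a non-decreasing `[0,∞]`-valued modulus on `𝒵` (values outside of `𝒵`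
are irrelevant dummy values). -/
def Nmod (κ : ℝ → ℝ≥0∞) : Prop := MonotoneOn κ Zset

/-- `t₋`: the largest element of `𝒵` below a real `t > 0`. -/
def tminus (t : ℝ) : ℝ := if 1 ≤ t then (⌊t⌋ : ℝ) else 1 / (⌈1 / t⌉ : ℝ)

/-- `t₊`: the smallest element of `𝒵` above a real `t > 0`. -/
def tplus (t : ℝ) : ℝ := if 1 ≤ t then (⌈t⌉ : ℝ) else 1 / (⌊1 / t⌋ : ℝ)

/-- The pair `(κ, ω)` belongs to `M_coarse`. -/
def Mcoarse (κ ω : ℝ → ℝ≥0∞) : Prop :=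
  (∀ r ∈ Zset, ω r < ⊤) ∧ Filter.Tendsto (fun n : ℕ => κ n) Filter.atTop (nhds ⊤)

/-- The pair `(κ, ω)` belongs to `M_uniform`. -/
def Muniform (κ ω : ℝ → ℝ≥0∞) : Prop :=
  (∀ r ∈ Zset, 0 < κ r) ∧
    Filter.Tendsto (fun n : ℕ => ω (1 / (n + 1 : ℝ))) Filter.atTop (nhds 0)

/-- The pair `(κ, ω)` belongs to `M_Lipschitz`. -/
def MLipschitz (κ ω : ℝ → ℝ≥0∞) : Prop :=
  ∃ c C : ℝ, 0 < c ∧ c < C ∧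
    ∀ r ∈ Zset, ENNReal.ofReal (c * r) ≤ κ r ∧ ω r ≤ ENNReal.ofReal (C * r)

/-! ### Ill-foundedness and ranks of binary relations restricted to subsets -/

/-- The relation `r` is ill-founded on the subset `S`. -/
def IllFoundedOn {A : Type*} (r : A → A → Prop) (S : Set A) : Prop :=
  ∃ a : ℕ → A, (∀ n, a n ∈ S) ∧ ∀ n, r (a (n + 1)) (a n)

/-- The rank `rk(S, r)` of a relation `r`, well-founded on a subset `S`. -/
def relRankOn {A : Type*} (r : A → A → Prop) (S : Set A)
    (h : WellFounded fun a b : S => r a b) : Ordinal :=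
  ⨆ a : S, Order.succ (h.apply a).rank

/-! ### The simple embeddability ranks -/

/-- A quadruple `(κ, ω, k, φ)` as in the definition of `Ω(D,E)`; the countable dense set `D` is
given by an enumeration `x : ℕ → X` and `φ : D → E` is represented by the map on indices. -/
structure Quad (E : Type*) where
  kappa : ℝ → ℝ≥0∞
  omega : ℝ → ℝ≥0∞
  k : ℕ
  phi : ℕ → E

/-- The set `Ω(D,E)` where `D` is enumerated by `x : ℕ → X`. -/
def OmegaSet {X E : Type*} [MetricSpace X] [MetricSpace E] (x : ℕ → X) : Set (Quad E) :=
  {q | Nmod q.kappa ∧ Nmod q.omega ∧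
    (∀ i j : ℕ, x i = x j → q.phi i = q.phi j) ∧
    ∀ i < q.k, ∀ j < q.k, x i ≠ x j →
      q.kappa (tminus (dist (x i) (x j))) ≤ edist (q.phi i) (q.phi j) ∧
      edist (q.phi i) (q.phi j) ≤ q.omega (tplus (dist (x i) (x j)))}

/-- The set `Coa(D,E)`. -/
def CoaSet {X E : Type*} [MetricSpace X] [MetricSpace E] (x : ℕ → X) : Set (Quad E) :=
  {q ∈ OmegaSet x | Mcoarse q.kappa q.omega}

/-- The set `Uni(D,E)`. -/
def UniSet {X E : Type*} [MetricSpace X] [MetricSpace E] (x : ℕ → X) : Set (Quad E) :=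
  {q ∈ OmegaSet x | Muniform q.kappa q.omega}

/-- The set `Lip(D,E)`. -/
def LipSet {X E : Type*} [MetricSpace X] [MetricSpace E] (x : ℕ → X) : Set (Quad E) :=
  {q ∈ OmegaSet x | MLipschitz q.kappa q.omega}

/-- The relation `<` on `Ω(D,E)`. -/
def QuadRel {E : Type*} (p q : Quad E) : Prop :=
  p.kappa = q.kappa ∧ p.omega = q.omega ∧ p.k = q.k + 1 ∧ ∀ i < q.k, p.phi i = q.phi i

/-! ### Embeddability ranks based on Schauder bases -/

/-- The copy of `ℤ` inside `ℝ`. -/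
def ZR : Set ℝ := Set.range ((↑) : ℤ → ℝ)

/-- The copy of `ℚ` inside `ℝ`. -/
def QR : Set ℝ := Set.range ((↑) : ℚ → ℝ)

/-- `R[A]`: the set of `R`-linear combinations of the vectors `e i`, `i ∈ A`. -/
def RComb {X : Type*} [NormedAddCommGroup X] [Module ℝ X] (R : Set ℝ) (e : ℕ → X)
    (A : Finset ℕ) : Set X :=
  {x | ∃ c : ℕ → ℝ, (∀ i, c i ∈ R) ∧ x = ∑ i ∈ A, c i • e i}

/-- `R[e₁,e₂,…]`: the set of all finite `R`-linear combinations of the vectors `e i`. -/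
def RCombAll {X : Type*} [NormedAddCommGroup X] [Module ℝ X] (R : Set ℝ) (e : ℕ → X) : Set X :=
  ⋃ A : Finset ℕ, RComb R e A

/-- `A ≺* B` for finite subsets of `ℕ`: `A` is obtained from `B` by adding one element larger
than all elements of `B`. -/
def PrecStar (A B : Finset ℕ) : Prop := ∃ m : ℕ, (∀ b ∈ B, b < m) ∧ A = insert m B

/-- A quadruple `(κ, ω, A, φ)` as in the definition of `Θ(R,(eₙ),E)`; the finite subset `A` of
`{e₁,e₂,…}` is recorded by the finite set of indices, and `φ` (a map on `R[e₁,e₂,…]`) is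
represented by a map on `X` (only its values on `R`-linear combinations are ever relevant). -/
structure QuadF (X E : Type*) where
  kappa : ℝ → ℝ≥0∞
  omega : ℝ → ℝ≥0∞
  A : Finset ℕ
  phi : X → E

/-- The set `Θ(R,(eₙ),E)`. -/
def ThetaSet {X E : Type*} [NormedAddCommGroup X] [Module ℝ X] [MetricSpace E]
    (R : Set ℝ) (e : ℕ → X) : Set (QuadF X E) :=
  {q | Nmod q.kappa ∧ Nmod q.omega ∧
    ∀ x ∈ RComb R e q.A, ∀ y ∈ RComb R e q.A, x ≠ y →
      q.kappa (tminus (dist x y)) ≤ edist (q.phi x) (q.phi y) ∧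
      edist (q.phi x) (q.phi y) ≤ q.omega (tplus (dist x y))}

/-- The set `Coa(R,(eₙ),E)`. -/
def CoaTheta {X E : Type*} [NormedAddCommGroup X] [Module ℝ X] [MetricSpace E]
    (R : Set ℝ) (e : ℕ → X) : Set (QuadF X E) :=
  {q ∈ ThetaSet R e | Mcoarse q.kappa q.omega}

/-- The set `Uni(R,(eₙ),E)`. -/
def UniTheta {X E : Type*} [NormedAddCommGroup X] [Module ℝ X] [MetricSpace E]
    (R : Set ℝ) (e : ℕ → X) : Set (QuadF X E) :=
  {q ∈ ThetaSet R e | Muniform q.kappa q.omega}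

/-- The set `Lip(R,(eₙ),E)`. -/
def LipTheta {X E : Type*} [NormedAddCommGroup X] [Module ℝ X] [MetricSpace E]
    (R : Set ℝ) (e : ℕ → X) : Set (QuadF X E) :=
  {q ∈ ThetaSet R e | MLipschitz q.kappa q.omega}

/-- The relation `<` on `Θ(R,(eₙ),E)`. -/
def QuadFRel {X E : Type*} [NormedAddCommGroup X] [Module ℝ X]
    (R : Set ℝ) (e : ℕ → X) (p q : QuadF X E) : Prop :=
  p.kappa = q.kappa ∧ p.omega = q.omega ∧ PrecStar p.A q.A ∧
    ∀ x ∈ RComb R e q.A, p.phi x = q.phi x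

/-! ### Schauder bases, basic sequences, subsymmetric bases -/

/-- `(eₙ)` is a Schauder basis of the subset `S`: every element of `S` has a unique
norm-convergent expansion. -/
def IsSchauderBasisOf {X : Type*} [NormedAddCommGroup X] [Module ℝ X] (e : ℕ → X)
    (S : Set X) : Prop :=
  ∀ x ∈ S, ∃! a : ℕ → ℝ,
    Filter.Tendsto (fun N => ∑ i ∈ Finset.range N, a i • e i) Filter.atTop (nhds x)

/-- `(eₙ)` is a Schauder basis of the whole space `X`. -/
def IsSchauderBasis {X : Type*} [NormedAddCommGroup X] [Module ℝ X] (e : ℕ → X) : Prop :=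
  IsSchauderBasisOf e Set.univ

/-- `(eₙ)` is a basic sequence: it is a Schauder basis of its closed linear span. -/
def IsBasicSequence {X : Type*} [NormedAddCommGroup X] [Module ℝ X] (e : ℕ → X) : Prop :=
  IsSchauderBasisOf e (closure (Submodule.span ℝ (Set.range e) : Set X))

/-- `(eₙ)` is a subsymmetric basic sequence. -/
def IsSubsymmetric {X : Type*} [NormedAddCommGroup X] [Module ℝ X] (e : ℕ → X) : Prop :=
  IsBasicSequence e ∧ ∃ C : ℝ, 1 ≤ C ∧ ∀ n : ℕ → ℕ, StrictMono n →
    ∀ s : Finset ℕ, ∀ a : ℕ → ℝ,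
      C⁻¹ * ‖∑ k ∈ s, a k • e k‖ ≤ ‖∑ k ∈ s, a k • e (n k)‖ ∧
      ‖∑ k ∈ s, a k • e (n k)‖ ≤ C * ‖∑ k ∈ s, a k • e k‖

/-! ### Schreier families -/

/-- `n ≤ A`: either `A = ∅` or `n ≤ min A`. -/
def natLE (n : ℕ) (A : Finset ℕ) : Prop := ∀ a ∈ A, n ≤ a

/-- `A < B`: either one is empty or `max A < min B`. -/
def finLT (A B : Finset ℕ) : Prop := ∀ a ∈ A, ∀ b ∈ B, a < b

/-- The Schreier families `S_α`, relative to a fixed assignment `lseq` of fundamental sequences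
to (countable) limit ordinals; here `lseq l n` denotes `λ_{n+1}` in 1-based notation. -/
def Schreier (lseq : Ordinal → ℕ → Ordinal) (α : Ordinal) : Set (Finset ℕ) :=
  Ordinal.limitRecOn α
    ({A | ∃ n : ℕ, 1 ≤ n ∧ A = {n}} ∪ {∅})
    (fun _ S => {A | ∃ n : ℕ, 1 ≤ n ∧ ∃ f : ℕ → Finset ℕ,
      (∀ i < n, f i ∈ S) ∧ natLE n (f 0) ∧
      (∀ i j : ℕ, i < j → j < n → finLT (f i) (f j)) ∧
      A = (Finset.range n).biUnion f})
    (fun o _ ih => {A | ∃ n : ℕ, natLE (n + 1) A ∧ ∃ h : lseq o n < o, A ∈ ih (lseq o n) h})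

/-- `lseq` is a legitimate assignment of fundamental sequences: to every countable limit
ordinal `l` it assigns a strictly increasing sequence of smaller ordinals with supremum `l`. -/
def IsFundSeq (lseq : Ordinal → ℕ → Ordinal) : Prop :=
  ∀ l : Ordinal, Order.IsSuccLimit l → l < (Cardinal.aleph 1).ord →
    StrictMono (lseq l) ∧ (∀ n, lseq l n < l) ∧ (⨆ n, lseq l n) = l

/-! ### The space `c₀` and `Z[S_α]_{c₀}` -/

/-- The Banach space `c₀` of real sequences vanishing at infinity, with the sup norm. -/
abbrev c0 : Type := ZeroAtInftyContinuousMap ℕ ℝ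

/-- The standard unit vector basis of `c₀`. -/
def stdBasis (n : ℕ) : c0 :=
  { toFun := fun m => if m = n then (1 : ℝ) else 0
    continuous_toFun := continuous_of_discreteTopology
    zero_at_infty' := by
      refine Filter.Tendsto.mono_left ?_ Filter.cocompact_le_cofinite
      refine tendsto_nhds_of_eventually_eq ?_
      refine Filter.eventually_cofinite.mpr (Set.Finite.subset (Set.finite_singleton n) ?_)
      intro m hm
      by_contra h
      exact hm (if_neg h) }

/-- The metric space `Z[S_α]_{c₀}` (as a subset of `c₀`). -/
def ZSchreierSet (lseq : Ordinal → ℕ → Ordinal) (α : Ordinal) : Set c0 :=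
  {x | ∃ A ∈ Schreier lseq α, ∃ t : ℕ → ℤ, x = ∑ i ∈ A, (t i : ℝ) • stdBasis i}

/-! ### Eventual domination -/

/-- The family `F ⊆ ℕ^ℕ` is bounded with respect to eventual domination. -/
def EvDomBounded (F : Set (ℕ → ℕ)) : Prop :=
  ∃ g : ℕ → ℕ, ∀ f ∈ F, ∀ᶠ m in Filter.atTop, f m < g m

end

/-! A descending chain in `Coa(R,(eₙ),E)` has constant moduli `(κ, ω)` and maps that extend one
another, each step adjoining a basis vector `e_{m_k}` of larger index than all before; the union of
these maps is defined on `R[e_{m_1}, e_{m_2}, …]` and satisfies the `𝒵`-moduli bounds there, which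
(after turning `κ`, `ω` into real moduli) make it a coarse embedding. Conversely, the moduli of a
coarse embedding of `R[e_{n_1}, e_{n_2}, …]`, restricted to `𝒵`, lie in `M_coarse`, and its
restrictions to `R[e_{n_1}, …, e_{n_k}]`, `k = 0, 1, 2, …`, form a descending chain. -/

namespace Zset

lemma pos {r : ℝ} (hr : r ∈ Zset) : 0 < r := by
  obtain ⟨n, hn, rfl | rfl⟩ := hr <;> positivity

lemma subset_Ici : Zset ⊆ Ici (0 : ℝ) := fun _ hr => (pos hr).le

end Zset

lemma one_le_floor_one_div {t : ℝ} (ht : 0 < t) (h : t < 1) : (1 : ℝ) ≤ ⌊1 / t⌋ := by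
  exact_mod_cast Int.le_floor.2 (by exact_mod_cast (one_lt_one_div ht h).le)

lemma tminus_natCast {n : ℕ} (hn : 1 ≤ n) : tminus n = n := by
  simp [tminus, show (1 : ℝ) ≤ n by exact_mod_cast hn]

lemma tminus_mem_Zset {t : ℝ} (ht : 1 ≤ t) : tminus t ∈ Zset :=
  ⟨⌊t⌋₊, Nat.le_floor (by exact_mod_cast ht), Or.inl (by
    rw [tminus, if_pos ht, natCast_floor_eq_intCast_floor (by linarith)])⟩

lemma tminus_mono {s t : ℝ} (hs : 1 ≤ s) (hst : s ≤ t) : tminus s ≤ tminus t := by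
  rw [tminus, tminus, if_pos hs, if_pos (hs.trans hst)]
  exact_mod_cast Int.floor_le_floor hst

lemma tminus_nonneg {t : ℝ} (ht : 0 < t) : 0 ≤ tminus t := by
  unfold tminus
  split_ifs with h
  · exact_mod_cast Int.floor_nonneg.2 (by linarith)
  · positivity

lemma tminus_le {t : ℝ} (ht : 0 < t) : tminus t ≤ t := by
  unfold tminus
  split_ifs with h
  · exact Int.floor_le t
  · calc 1 / (⌈1 / t⌉ : ℝ) ≤ 1 / (1 / t) :=
          one_div_le_one_div_of_le (by positivity) (Int.le_ceil _)
      _ = t := one_div_one_div t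

lemma le_tplus {t : ℝ} (ht : 0 < t) : t ≤ tplus t := by
  unfold tplus
  split_ifs with h
  · exact Int.le_ceil t
  · calc t = 1 / (1 / t) := (one_div_one_div t).symm
      _ ≤ 1 / (⌊1 / t⌋ : ℝ) :=
          one_div_le_one_div_of_le (by linarith [one_le_floor_one_div ht (not_le.1 h)])
            (Int.floor_le _)

lemma tplus_mem_Zset {t : ℝ} (ht : 0 < t) : tplus t ∈ Zset := by
  unfold tplus
  split_ifs with h
  · exact ⟨⌈t⌉₊, Nat.one_le_iff_ne_zero.2 (by positivity), Or.inl
      (natCast_ceil_eq_intCast_ceil ht.le).symm⟩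
  · have h1 := one_le_floor_one_div ht (not_le.1 h)
    refine ⟨⌊1 / t⌋₊, Nat.le_floor (by exact_mod_cast h1.trans (Int.floor_le _)), Or.inr ?_⟩
    rw [natCast_floor_eq_intCast_floor (by positivity)]

lemma tplus_mono {s t : ℝ} (hs : 0 < s) (hst : s ≤ t) : tplus s ≤ tplus t := by
  have ht := hs.trans_le hst
  unfold tplus
  by_cases h1 : 1 ≤ s
  · rw [if_pos h1, if_pos (h1.trans hst)]
    exact_mod_cast Int.ceil_le_ceil hst
  have hfs := one_le_floor_one_div hs (not_le.1 h1)
  rw [if_neg h1]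
  split_ifs with h2
  · calc 1 / (⌊1 / s⌋ : ℝ) ≤ 1 := (div_le_one (by linarith)).2 hfs
      _ ≤ ⌈t⌉ := by exact_mod_cast Int.one_le_ceil_iff.2 ht
  · refine one_div_le_one_div_of_le (by linarith [one_le_floor_one_div ht (not_le.1 h2)]) ?_
    exact_mod_cast Int.floor_le_floor (one_div_le_one_div_of_le hs hst)

lemma zero_mem_of_eq_ZR_or_QR {R : Set ℝ} (hR : R = ZR ∨ R = QR) : (0 : ℝ) ∈ R := by
  rcases hR with rfl | rfl
  exacts [⟨0, Int.cast_zero⟩, ⟨0, Rat.cast_zero⟩]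

section RComb

variable {X : Type*} [NormedAddCommGroup X] [Module ℝ X] {R : Set ℝ}

lemma RComb_mono (h0 : (0 : ℝ) ∈ R) (e : ℕ → X) {A B : Finset ℕ} (hAB : A ⊆ B) :
    RComb R e A ⊆ RComb R e B := by
  classical
  rintro x ⟨c, hc, rfl⟩
  refine ⟨fun i => if i ∈ A then c i else 0, fun i => ?_, ?_⟩
  · dsimp only
    split_ifs
    exacts [hc i, h0]
  · rw [← Finset.sum_subset hAB fun i _ hi => by simp [hi]]
    exact Finset.sum_congr rfl fun i hi => by simp [hi]

lemma RComb_comp {n : ℕ → ℕ} (hn : Function.Injective n) (e : ℕ → X) (s : Finset ℕ) :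
    RComb R (fun k => e (n k)) s = RComb R e (s.image n) := by
  ext x
  simp only [RComb, mem_ofPred, Finset.sum_image hn.injOn]
  constructor
  · rintro ⟨c, hc, rfl⟩
    refine ⟨fun i => c (Function.invFun n i), fun i => hc _, ?_⟩
    simp only [Function.leftInverse_invFun hn _]
  · rintro ⟨c, hc, rfl⟩
    exact ⟨fun k => c (n k), fun k => hc _, rfl⟩

lemma mem_RCombAll_iff (h0 : (0 : ℝ) ∈ R) {e : ℕ → X} {x : X} :
    x ∈ RCombAll R e ↔ ∃ N, x ∈ RComb R e (Finset.range N) := by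
  refine ⟨fun hx => ?_, fun ⟨N, hN⟩ => mem_iUnion.2 ⟨_, hN⟩⟩
  obtain ⟨A, hA⟩ := mem_iUnion.1 hx
  exact ⟨A.sup id + 1, RComb_mono h0 e (fun i hi =>
    Finset.mem_range.2 (Nat.lt_succ_of_le (Finset.le_sup (f := id) hi))) hA⟩

lemma zero_mem_RCombAll (h0 : (0 : ℝ) ∈ R) (e : ℕ → X) : (0 : X) ∈ RCombAll R e :=
  mem_iUnion.2 ⟨∅, fun _ => 0, fun _ => h0, by simp⟩

end RComb

lemma precStar_image_range_succ {n : ℕ → ℕ} (hn : StrictMono n) (k : ℕ) :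
    PrecStar ((Finset.range (k + 1)).image n) ((Finset.range k).image n) := by
  refine ⟨n k, fun b hb => ?_, by rw [Finset.range_add_one, Finset.image_insert]⟩
  obtain ⟨i, hi, rfl⟩ := Finset.mem_image.1 hb
  exact hn (Finset.mem_range.1 hi)

def BoundedByModuli {Y E : Type*} [PseudoMetricSpace Y] [PseudoMetricSpace E]
    (κ ω : ℝ → ℝ≥0∞) (f : Y → E) : Prop :=
  ∀ x y, x ≠ y → κ (tminus (dist x y)) ≤ edist (f x) (f y) ∧
    edist (f x) (f y) ≤ ω (tplus (dist x y))

section CoarseModuli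

/-- Truncating by `t` keeps the value finite, so that `toReal` preserves monotonicity even where
`κ` takes the value `∞`. -/
noncomputable def coarseLowerOf (κ : ℝ → ℝ≥0∞) (t : ℝ) : ℝ :=
  if 1 ≤ t then (min (κ (tminus t)) (ENNReal.ofReal t)).toReal else 0

noncomputable def coarseUpperOf (ω : ℝ → ℝ≥0∞) (t : ℝ) : ℝ :=
  if 0 < t then (ω (tplus t)).toReal else 0

variable {κ ω : ℝ → ℝ≥0∞}

lemma coarseLowerOf_nonneg (κ : ℝ → ℝ≥0∞) (t : ℝ) : 0 ≤ coarseLowerOf κ t := by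
  unfold coarseLowerOf; split_ifs <;> simp

lemma coarseUpperOf_nonneg (ω : ℝ → ℝ≥0∞) (t : ℝ) : 0 ≤ coarseUpperOf ω t := by
  unfold coarseUpperOf; split_ifs <;> simp

lemma monotone_coarseLowerOf (hκ : Nmod κ) : Monotone (coarseLowerOf κ) := by
  intro s t hst
  by_cases hs : 1 ≤ s
  · have ht := hs.trans hst
    rw [coarseLowerOf, coarseLowerOf, if_pos hs, if_pos ht]
    refine ENNReal.toReal_mono (min_lt_of_right_lt ENNReal.ofReal_lt_top).ne ?_
    exact min_le_min (hκ (tminus_mem_Zset hs) (tminus_mem_Zset ht) (tminus_mono hs hst))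
      (ENNReal.ofReal_le_ofReal hst)
  · rw [coarseLowerOf, if_neg hs]
    exact coarseLowerOf_nonneg κ t

lemma monotone_coarseUpperOf (hω : Nmod ω) (hfin : ∀ r ∈ Zset, ω r < ⊤) :
    Monotone (coarseUpperOf ω) := by
  intro s t hst
  by_cases hs : 0 < s
  · have ht := hs.trans_le hst
    rw [coarseUpperOf, coarseUpperOf, if_pos hs, if_pos ht]
    exact ENNReal.toReal_mono (hfin _ (tplus_mem_Zset ht)).ne
      (hω (tplus_mem_Zset hs) (tplus_mem_Zset ht) (tplus_mono hs hst))
  · rw [coarseUpperOf, if_neg hs]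
    exact coarseUpperOf_nonneg ω t

lemma tendsto_coarseLowerOf (hκ : Nmod κ) (hlim : Tendsto (fun n : ℕ => κ n) atTop (𝓝 ⊤)) :
    Tendsto (coarseLowerOf κ) atTop atTop := by
  refine tendsto_atTop_atTop_of_monotone (monotone_coarseLowerOf hκ) fun b => ?_
  have hmin : Tendsto (fun n : ℕ => min (κ n) (ENNReal.ofReal n)) atTop (𝓝 ⊤) := by
    simpa using hlim.min (ENNReal.tendsto_ofReal_atTop.comp tendsto_natCast_atTop_atTop)
  obtain ⟨n, hbn, hn⟩ := ((hmin.eventually (eventually_gt_nhds ENNReal.ofReal_lt_top)).and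
    (eventually_ge_atTop 1)).exists
  refine ⟨n, ?_⟩
  rw [coarseLowerOf, if_pos (by exact_mod_cast hn), tminus_natCast hn]
  exact (ENNReal.ofReal_le_iff_le_toReal (min_lt_of_right_lt ENNReal.ofReal_lt_top).ne).1 hbn.le

variable {Y E : Type*} [MetricSpace Y] [PseudoMetricSpace E] {f : Y → E}

lemma BoundedByModuli.coarseLowerOf_le (hf : BoundedByModuli κ ω f) (x y : Y) :
    coarseLowerOf κ (dist x y) ≤ dist (f x) (f y) := by
  unfold coarseLowerOf
  split_ifs with h
  · have hxy : x ≠ y := fun h' => by simp [h'] at h; linarith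
    rw [dist_edist (f x)]
    exact ENNReal.toReal_mono (edist_ne_top _ _) ((min_le_left _ _).trans (hf x y hxy).1)
  · exact dist_nonneg

lemma BoundedByModuli.le_coarseUpperOf (hf : BoundedByModuli κ ω f)
    (hfin : ∀ r ∈ Zset, ω r < ⊤) (x y : Y) :
    dist (f x) (f y) ≤ coarseUpperOf ω (dist x y) := by
  unfold coarseUpperOf
  split_ifs with h
  · rw [dist_edist (f x)]
    exact ENNReal.toReal_mono (hfin _ (tplus_mem_Zset h)).ne (hf x y (dist_pos.1 h)).2
  · rw [dist_le_zero.1 (not_lt.1 h), dist_self]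

theorem coarseEmbeddingMap_of_boundedByModuli (hκ : Nmod κ) (hω : Nmod ω) (hc : Mcoarse κ ω)
    (hf : BoundedByModuli κ ω f) : CoarseEmbeddingMap f :=
  ⟨coarseLowerOf κ, coarseUpperOf ω, (monotone_coarseLowerOf hκ).monotoneOn _,
    (monotone_coarseUpperOf hω hc.1).monotoneOn _,
    fun t _ => ⟨coarseLowerOf_nonneg κ t, coarseUpperOf_nonneg ω t⟩,
    tendsto_coarseLowerOf hκ hc.2,
    fun x y => ⟨hf.coarseLowerOf_le x y, hf.le_coarseUpperOf hc.1 x y⟩⟩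

end CoarseModuli

theorem CoarseEmbeddingMap.exists_boundedByModuli {Y E : Type*} [MetricSpace Y]
    [PseudoMetricSpace E] {f : Y → E} (hf : CoarseEmbeddingMap f) :
    ∃ κ ω, Nmod κ ∧ Nmod ω ∧ Mcoarse κ ω ∧ BoundedByModuli κ ω f := by
  obtain ⟨κ, ω, hκ, hω, -, hlim, hbound⟩ := hf
  refine ⟨fun r => ENNReal.ofReal (κ r), fun r => ENNReal.ofReal (ω r),
    fun r hr s hs hrs =>
      ENNReal.ofReal_le_ofReal (hκ (Zset.subset_Ici hr) (Zset.subset_Ici hs) hrs),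
    fun r hr s hs hrs =>
      ENNReal.ofReal_le_ofReal (hω (Zset.subset_Ici hr) (Zset.subset_Ici hs) hrs),
    ⟨fun _ _ => ENNReal.ofReal_lt_top,
      ENNReal.tendsto_ofReal_atTop.comp (hlim.comp tendsto_natCast_atTop_atTop)⟩,
    fun x y hxy => ?_⟩
  have hd : 0 < dist x y := dist_pos.2 hxy
  rw [edist_dist]
  exact ⟨ENNReal.ofReal_le_ofReal ((hκ (tminus_nonneg hd) dist_nonneg (tminus_le hd)).trans
      (hbound x y).1),
    ENNReal.ofReal_le_ofReal ((hbound x y).2.trans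
      (hω dist_nonneg (dist_nonneg.trans (le_tplus hd)) (le_tplus hd)))⟩

section Chains

variable {X E : Type*} [NormedAddCommGroup X] [Module ℝ X] {R : Set ℝ} {e : ℕ → X}

lemma QuadFRel.chain_le (h0 : (0 : ℝ) ∈ R) {a : ℕ → QuadF X E}
    (hrel : ∀ k, QuadFRel R e (a (k + 1)) (a k)) {j k : ℕ} (hjk : j ≤ k) :
    (a k).kappa = (a j).kappa ∧ (a k).omega = (a j).omega ∧ (a j).A ⊆ (a k).A ∧
      ∀ x ∈ RComb R e (a j).A, (a k).phi x = (a j).phi x := by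
  induction k, hjk using Nat.le_induction with
  | base => exact ⟨rfl, rfl, subset_rfl, fun _ _ => rfl⟩
  | succ k _ ih =>
    obtain ⟨hκ, hω, ⟨m, -, hA⟩, hφ⟩ := hrel k
    refine ⟨hκ.trans ih.1, hω.trans ih.2.1, ih.2.2.1.trans (hA ▸ Finset.subset_insert _ _),
      fun x hx => ?_⟩
    rw [hφ x (RComb_mono h0 e ih.2.2.1 hx), ih.2.2.2 x hx]

lemma exists_strictMono_boundedByModuli_of_chain [MetricSpace E] (h0 : (0 : ℝ) ∈ R)
    {a : ℕ → QuadF X E} (ha : ∀ k, a k ∈ ThetaSet R e)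
    (hrel : ∀ k, QuadFRel R e (a (k + 1)) (a k)) :
    ∃ m : ℕ → ℕ, StrictMono m ∧ ∃ f : ↥(RCombAll R fun k => e (m k)) → E,
      BoundedByModuli (a 0).kappa (a 0).omega f := by
  choose m hm_gt hm_eq using fun k => (hrel k).2.2.1
  have hm_mem (k : ℕ) : m k ∈ (a (k + 1)).A := hm_eq k ▸ Finset.mem_insert_self _ _
  have hm : StrictMono m := strictMono_nat_of_lt_succ fun k => hm_gt (k + 1) _ (hm_mem k)
  have himage (N : ℕ) : (Finset.range N).image m ⊆ (a N).A := by
    induction N with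
    | zero => simp
    | succ N ih =>
      rw [Finset.range_add_one, Finset.image_insert, hm_eq N]
      exact Finset.insert_subset_insert _ ih
  have hcover (x : ↥(RCombAll R fun k => e (m k))) : ∃ N, (x : X) ∈ RComb R e (a N).A := by
    obtain ⟨N, hN⟩ := (mem_RCombAll_iff h0).1 x.2
    exact ⟨N, RComb_mono h0 e (himage N) (RComb_comp hm.injective e _ ▸ hN)⟩
  choose N hN using hcover
  refine ⟨m, hm, fun x => (a (N x)).phi x, fun x y hxy => ?_⟩
  set K := max (N x) (N y)
  obtain ⟨hκ, hω, -, -⟩ := QuadFRel.chain_le h0 hrel (Nat.zero_le K)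
  obtain ⟨-, -, hAx, hφx⟩ := QuadFRel.chain_le h0 hrel (le_max_left (N x) (N y))
  obtain ⟨-, -, hAy, hφy⟩ := QuadFRel.chain_le h0 hrel (le_max_right (N x) (N y))
  have hK := (ha K).2.2 x (RComb_mono h0 e hAx (hN x)) y (RComb_mono h0 e hAy (hN y))
    (Subtype.coe_ne_coe.2 hxy)
  rwa [hκ, hω, hφx x (hN x), hφy y (hN y)] at hK

lemma illFoundedOn_coaTheta_of_boundedByModuli [MetricSpace E] (h0 : (0 : ℝ) ∈ R) {n : ℕ → ℕ}
    (hn : StrictMono n) {f : ↥(RCombAll R fun k => e (n k)) → E} {κ ω : ℝ → ℝ≥0∞}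
    (hκ : Nmod κ) (hω : Nmod ω) (hc : Mcoarse κ ω) (hf : BoundedByModuli κ ω f) :
    IllFoundedOn (QuadFRel (E := E) R e) (CoaTheta R e) := by
  set φ : X → E := Function.extend Subtype.val f fun _ => f ⟨0, zero_mem_RCombAll h0 _⟩
  have hφ (x : ↥(RCombAll R fun k => e (n k))) : φ x = f x :=
    Subtype.val_injective.extend_apply _ _ x
  refine ⟨fun k => ⟨κ, ω, (Finset.range k).image n, φ⟩, fun k => ⟨⟨hκ, hω, ?_⟩, hc⟩,
    fun k => ⟨rfl, rfl, precStar_image_range_succ hn k, fun _ _ => rfl⟩⟩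
  intro x hx y hy hxy
  have hmem {z : X} (hz : z ∈ RComb R e ((Finset.range k).image n)) :
      z ∈ RCombAll R fun j => e (n j) :=
    mem_iUnion.2 ⟨_, (RComb_comp hn.injective e _).symm ▸ hz⟩
  have hxy' := hf ⟨x, hmem hx⟩ ⟨y, hmem hy⟩ (Subtype.coe_ne_coe.1 hxy)
  rwa [← hφ, ← hφ] at hxy'

end Chains

theorem stmt10_general {X E : Type*} [NormedAddCommGroup X] [NormedSpace ℝ X]
    [MetricSpace E] (e : ℕ → X)
    (R : Set ℝ) (hR : R = ZR ∨ R = QR) :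
    IllFoundedOn (QuadFRel (E := E) R e) (CoaTheta (E := E) R e) ↔
      ∃ n : ℕ → ℕ, StrictMono n ∧
        ∃ f : ↥(RCombAll R fun k => e (n k)) → E, CoarseEmbeddingMap f := by
  have h0 := zero_mem_of_eq_ZR_or_QR hR
  constructor
  · rintro ⟨a, ha, hrel⟩
    obtain ⟨m, hm, f, hf⟩ := exists_strictMono_boundedByModuli_of_chain h0 (fun k => (ha k).1) hrel
    exact ⟨m, hm, f, coarseEmbeddingMap_of_boundedByModuli (ha 0).1.1 (ha 0).1.2.1 (ha 0).2 hf⟩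
  · rintro ⟨n, hn, f, hf⟩
    obtain ⟨κ, ω, hκ, hω, hc, hb⟩ := hf.exists_boundedByModuli
    exact illFoundedOn_coaTheta_of_boundedByModuli h0 hn hκ hω hc hb

theorem stmt10 {X E : Type*} [NormedAddCommGroup X] [NormedSpace ℝ X] [CompleteSpace X]
    [MetricSpace E] (e : ℕ → X) (he : IsBasicSequence e)
    (R : Set ℝ) (hR : R = ZR ∨ R = QR) :
    IllFoundedOn (QuadFRel (E := E) R e) (CoaTheta (E := E) R e) ↔
      ∃ n : ℕ → ℕ, StrictMono n ∧
        ∃ f : ↥(RCombAll R fun k => e (n k)) → E, CoarseEmbeddingMap f :=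
  stmt10_general e R hR
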